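/- The map i : ℚ/ℤ → ℚ ∩ [0,1) sending each coset to its unique representative in [0,1) is a coarse equivalence, where ℚ/ℤ carries the quotient norm of ‖m/n‖_ℚ = |m/n| + ln(n) and ℚ ∩ [0,1) carries the metric induced by ‖·‖_ℚ; in particular d_ℚ(i(r̄), i(s̄)) ≤ 3 d(r̄, s̄) for all r̄, s̄ ∈ ℚ/ℤ. -/

import Mathlib

/-- `d` is a metric on `X` (given as an explicit distance function). -/
def IsMetricD {X : Type*} (d : X → X → ℝ) : Prop :=
  (∀ x y, 0 ≤ d x y) ∧ (∀ x y, d x y = 0 ↔ x = y) ∧ (∀ x y, d x y = d y x) ∧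
    ∀ x y z, d x z ≤ d x y + d y z

/-- A set is bounded with respect to the distance function `d`. -/
def IsBoundedD {X : Type*} (d : X → X → ℝ) (B : Set X) : Prop :=
  ∃ C : ℝ, ∀ x ∈ B, ∀ y ∈ B, d x y ≤ C

/-- `f` is bornologous with respect to the distance functions `dX`, `dY`. -/
def BornologousD {X Y : Type*} (dX : X → X → ℝ) (dY : Y → Y → ℝ) (f : X → Y) : Prop :=
  ∀ R > (0 : ℝ), ∃ S > (0 : ℝ), ∀ x y, dX x y < R → dY (f x) (f y) < S

/-- `f` is metrically proper: preimages of bounded sets are bounded. -/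
def MetricallyProperD {X Y : Type*} (dX : X → X → ℝ) (dY : Y → Y → ℝ) (f : X → Y) : Prop :=
  ∀ B : Set Y, IsBoundedD dY B → IsBoundedD dX (f ⁻¹' B)

/-- A coarse map is bornologous and metrically proper. -/
def CoarseMapD {X Y : Type*} (dX : X → X → ℝ) (dY : Y → Y → ℝ) (f : X → Y) : Prop :=
  BornologousD dX dY f ∧ MetricallyProperD dX dY f

/-- Two maps are close if pointwise distances are uniformly bounded. -/
def CloseD {X Y : Type*} (dY : Y → Y → ℝ) (f g : X → Y) : Prop :=
  ∃ C : ℝ, ∀ x, dY (f x) (g x) ≤ C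

/-- `f` is a coarse equivalence: a coarse map with a coarse inverse up to closeness. -/
def CoarseEquivD {X Y : Type*} (dX : X → X → ℝ) (dY : Y → Y → ℝ) (f : X → Y) : Prop :=
  CoarseMapD dX dY f ∧ ∃ g : Y → X, CoarseMapD dY dX g ∧
    CloseD dY (f ∘ g) id ∧ CloseD dX (g ∘ f) id

/-- The norm `‖m/n‖ = |m/n| + ln n` on `ℚ`, for `m/n` in standard form. -/
noncomputable def qNorm (q : ℚ) : ℝ := |(q : ℝ)| + Real.log q.den

/-- The left-invariant metric on `ℚ` induced by `qNorm`. -/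
noncomputable def qDist (x y : ℚ) : ℝ := qNorm (y - x)

/-- The quotient group `ℚ/ℤ`. -/
abbrev QZ : Type := ℚ ⧸ AddSubgroup.zmultiples (1 : ℚ)

/-- The quotient norm on `ℚ/ℤ` induced by `qNorm`. -/
noncomputable def QZnorm (x : QZ) : ℝ :=
  sInf {c : ℝ | ∃ r : ℚ, (QuotientAddGroup.mk r : QZ) = x ∧ c = qNorm r}

/-- The left-invariant metric on `ℚ/ℤ` induced by the quotient norm. -/
noncomputable def QZdist (x y : QZ) : ℝ := QZnorm (y - x)

/-! Every representative of a coset in `ℚ/ℤ` has the same denominator `n`, so the quotient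
norm of the coset is at least `ln n`. For the difference `t ∈ (-1, 1)` of two representatives
in `[0, 1)`, either `t = 0` or `n ≥ 2`, and then `‖t‖_ℚ < 1 + ln n ≤ 3 ln n` because
`ln 2 > 1/2`. Hence `i` is `3`-Lipschitz, while its inverse, the projection, is `1`-Lipschitz;
two mutually inverse Lipschitz maps form a coarse equivalence. -/

open QuotientAddGroup

section Coarse

variable {X Y : Type*} {dX : X → X → ℝ} {dY : Y → Y → ℝ}

lemma bornologousD_of_le_mul {f : X → Y} {K : ℝ} (hK : 0 ≤ K)
    (hf : ∀ x y, dY (f x) (f y) ≤ K * dX x y) : BornologousD dX dY f := by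
  intro R hR
  refine ⟨K * R + 1, by positivity, fun x y hxy => ?_⟩
  calc dY (f x) (f y) ≤ K * dX x y := hf x y
    _ ≤ K * R := mul_le_mul_of_nonneg_left hxy.le hK
    _ < K * R + 1 := lt_add_one _

lemma metricallyProperD_of_leftInverse {f : X → Y} {g : Y → X} (hgf : Function.LeftInverse g f)
    {L : ℝ} (hL : 0 ≤ L) (hg : ∀ a b, dX (g a) (g b) ≤ L * dY a b) :
    MetricallyProperD dX dY f := by
  rintro B ⟨C, hC⟩
  refine ⟨L * C, fun x hx y hy => ?_⟩
  calc dX x y = dX (g (f x)) (g (f y)) := by rw [hgf x, hgf y]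
    _ ≤ L * dY (f x) (f y) := hg _ _
    _ ≤ L * C := mul_le_mul_of_nonneg_left (hC _ hx _ hy) hL

lemma closeD_comp_id_of_leftInverse {f : X → Y} {g : Y → X} (hgf : Function.LeftInverse g f)
    (hdX : ∀ x, dX x x = 0) : CloseD dX (g ∘ f) id :=
  ⟨0, fun x => by simp only [Function.comp_apply, hgf x, id_eq, hdX, le_refl]⟩

lemma coarseEquivD_of_lipschitz_inverse {f : X → Y} {g : Y → X}
    (hgf : Function.LeftInverse g f) (hfg : Function.LeftInverse f g)
    (hdX : ∀ x, dX x x = 0) (hdY : ∀ y, dY y y = 0) {K L : ℝ} (hK : 0 ≤ K) (hL : 0 ≤ L)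
    (hf : ∀ x y, dY (f x) (f y) ≤ K * dX x y) (hg : ∀ a b, dX (g a) (g b) ≤ L * dY a b) :
    CoarseEquivD dX dY f :=
  ⟨⟨bornologousD_of_le_mul hK hf, metricallyProperD_of_leftInverse hgf hL hg⟩, g,
    ⟨bornologousD_of_le_mul hL hg, metricallyProperD_of_leftInverse hfg hK hf⟩,
    closeD_comp_id_of_leftInverse hfg hdY, closeD_comp_id_of_leftInverse hgf hdX⟩

end Coarse

lemma qNorm_nonneg (q : ℚ) : 0 ≤ qNorm q :=
  add_nonneg (abs_nonneg _) (Real.log_natCast_nonneg _)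

lemma qNorm_zero : qNorm 0 = 0 := by
  simp [qNorm]

lemma qDist_self (q : ℚ) : qDist q q = 0 := by
  rw [qDist, sub_self, qNorm_zero]

lemma qNorm_le_three_mul_qNorm_add_intCast {t : ℚ} (ht : |t| < 1) (k : ℤ) :
    qNorm t ≤ 3 * qNorm (t + k) := by
  rcases eq_or_ne t 0 with rfl | ht0
  · rw [qNorm_zero]
    linarith [qNorm_nonneg ((0 : ℚ) + k)]
  have hden_ne_one : t.den ≠ 1 := fun h => ht0 <| by
    rw [← (Rat.den_eq_one_iff t).mp h] at ht ⊢
    exact_mod_cast Int.abs_lt_one_iff.mp (by exact_mod_cast ht)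
  have hden : (2 : ℝ) ≤ t.den := by
    have := t.pos
    exact_mod_cast (by omega : 2 ≤ t.den)
  have hlog : 1 / 2 < Real.log t.den :=
    calc (1 / 2 : ℝ) < Real.log 2 := by linarith [Real.log_two_gt_d9]
      _ ≤ Real.log t.den := Real.log_le_log two_pos hden
  have htR : |(t : ℝ)| < 1 := by exact_mod_cast ht
  rw [qNorm, qNorm, Rat.add_intCast_den]
  linarith [abs_nonneg ((t + k : ℚ) : ℝ)]

lemma mk_eq_mk_iff_exists_intCast {a b : ℚ} :
    (mk a : QZ) = mk b ↔ ∃ k : ℤ, a = b + k := by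
  rw [eq_comm, QuotientAddGroup.eq, ← Int.range_castAddHom]
  simp only [AddMonoidHom.mem_range, Int.coe_castAddHom]
  exact exists_congr fun _ => by constructor <;> intro h <;> linarith

lemma QZnorm_mk_le (r : ℚ) : QZnorm (mk r) ≤ qNorm r :=
  csInf_le ⟨0, by rintro _ ⟨s, -, rfl⟩; exact qNorm_nonneg s⟩ ⟨r, rfl, rfl⟩

lemma le_QZnorm_mk {r : ℚ} {c : ℝ} (h : ∀ k : ℤ, c ≤ qNorm (r + k)) :
    c ≤ QZnorm (mk r) := by
  refine le_csInf ⟨qNorm r, r, rfl, rfl⟩ ?_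
  rintro _ ⟨s, hs, rfl⟩
  obtain ⟨k, rfl⟩ := mk_eq_mk_iff_exists_intCast.mp hs
  exact h k

lemma QZnorm_zero : QZnorm 0 = 0 :=
  le_antisymm ((QZnorm_mk_le 0).trans_eq qNorm_zero) (le_QZnorm_mk fun _ => qNorm_nonneg _)

lemma QZdist_self (x : QZ) : QZdist x x = 0 := by
  rw [QZdist, sub_self, QZnorm_zero]

lemma QZdist_mk_le (a b : ℚ) : QZdist (mk a) (mk b) ≤ qDist a b := by
  rw [QZdist, ← mk_sub]
  exact QZnorm_mk_le _

lemma qNorm_le_three_mul_QZnorm_mk {t : ℚ} (ht : |t| < 1) : qNorm t ≤ 3 * QZnorm (mk t) := by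
  have : qNorm t / 3 ≤ QZnorm (mk t) :=
    le_QZnorm_mk fun k => by linarith [qNorm_le_three_mul_qNorm_add_intCast ht k]
  linarith

noncomputable def fractRep (x : QZ) : {q : ℚ // 0 ≤ q ∧ q < 1} :=
  ⟨Int.fract x.out, Int.fract_nonneg _, Int.fract_lt_one _⟩

lemma fractRep_mk (q : ℚ) : (fractRep (mk q) : ℚ) = Int.fract q := by
  obtain ⟨k, hk⟩ := mk_eq_mk_iff_exists_intCast.mp (QuotientAddGroup.out_eq' (mk q : QZ))
  exact Int.fract_eq_fract.mpr ⟨k, by rw [hk]; ring⟩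

lemma mk_fractRep (x : QZ) : (mk (fractRep x : ℚ) : QZ) = x := by
  induction x using QuotientAddGroup.induction_on with
  | H q =>
    refine mk_eq_mk_iff_exists_intCast.mpr ⟨-⌊q⌋, ?_⟩
    rw [fractRep_mk, Int.fract, Int.cast_neg, sub_eq_add_neg]

lemma fractRep_mk_coe (q : {q : ℚ // 0 ≤ q ∧ q < 1}) : fractRep (mk (q : ℚ)) = q :=
  Subtype.ext <| (fractRep_mk _).trans (Int.fract_eq_self.mpr q.2)

lemma qDist_fractRep_le (r s : QZ) :
    qDist (fractRep r : ℚ) (fractRep s : ℚ) ≤ 3 * QZdist r s := by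
  have hlt : |(fractRep s : ℚ) - fractRep r| < 1 :=
    abs_sub_lt_iff.mpr ⟨by linarith [(fractRep s).2.2, (fractRep r).2.1],
      by linarith [(fractRep r).2.2, (fractRep s).2.1]⟩
  have h := qNorm_le_three_mul_QZnorm_mk hlt
  rwa [mk_sub, mk_fractRep, mk_fractRep] at h

/-- The map `ℚ/ℤ → ℚ ∩ [0,1)` sending each coset to its representative in `[0,1)` is a
coarse equivalence; moreover `d_ℚ(i r̄, i s̄) ≤ 3 d(r̄, s̄)`. -/
theorem stmt15 :
    ∃ i : QZ → {q : ℚ // 0 ≤ q ∧ q < 1},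
      (∀ x : QZ, (QuotientAddGroup.mk ((i x) : ℚ) : QZ) = x) ∧
      CoarseEquivD QZdist (fun a b : {q : ℚ // 0 ≤ q ∧ q < 1} => qDist (a : ℚ) (b : ℚ)) i ∧
      ∀ r s : QZ, qDist ((i r) : ℚ) ((i s) : ℚ) ≤ 3 * QZdist r s := by
  refine ⟨fractRep, mk_fractRep, ?_, qDist_fractRep_le⟩
  exact coarseEquivD_of_lipschitz_inverse (g := fun q => mk (q : ℚ)) mk_fractRep fractRep_mk_coe
    QZdist_self (fun q => qDist_self q) (by norm_num) zero_le_one qDist_fractRep_le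
    (fun a b => (QZdist_mk_le a b).trans_eq (one_mul _).symm)
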